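/- arXiv:2106.00515 — 2 statements merged into one kernel-verified Lean document; each statement's English description precedes it below -/
import Mathlib

section
/- Let n, d_m, d be positive integers, let X ∈ ℝ^{n×d_m} have rows x_1,…,x_n (row vectors), and let W_Q, W_K, W_V ∈ ℝ^{d_m×d}. Fix a query index l ∈ {1,…,n} and a nonempty subset S ⊆ {1,…,n}. For t ∈ S define the attention weights a_{lt}(W_Q) = exp(x_l W_Q W_K^T x_t^T/√d) / Σ_{t'∈S} exp(x_l W_Q W_K^T x_{t'}^T/√d), and set V̂_l(W_Q) = Σ_{t∈S} a_{lt}(W_Q) x_t W_V ∈ ℝ^{1×d}. Define the weighted covariance matrix Var_{a_l}(x) = Σ_{t∈S} a_{lt} x_t^T x_t − (Σ_{t∈S} a_{lt} x_t)^T (Σ_{t∈S} a_{lt} x_t) ∈ ℝ^{d_m×d_m}. Then V̂_l is differentiable in the entries of W_Q, and for every i ∈ {1,…,d_m} and j ∈ {1,…,d} the partial derivative of V̂_l with respect to the (i,j) entry of W_Q equals (1/√d) · x_{li} · W_{K,·j}^T Var_{a_l}(x) W_V, where x_{li} is the i-th entry of x_l and W_{K,·j} ∈ ℝ^{d_m}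 is the j-th column of W_K. In particular this holds both for the k-NN attention (S the selected top-k index set, held fixed) and for fully-connected attention (S = {1,…,n}). -/
open Matrix Finset Real

/-! Perturbing `W_Q` by `ε E_ij` shifts every attention score linearly in `ε`, by
`ε x_{li} (x_t W_K)_j / √d`. Differentiating a softmax average along a linear shift `c` of the
scores (quotient rule) gives the covariance of `c` and the averaged quantity under the softmax
weights, and by bilinearity the covariance of the two linear functionals `x_t ↦ x_t ⬝ u` and
`x_t ↦ x_t ⬝ v` of the tokens is `uᵀ Var v`. -/

theorem Matrix.vecMul_single_dotProduct {R m n : Type*} [CommSemiring R] [Fintype m] [Fintype n]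
    [DecidableEq m] [DecidableEq n] (x : m → R) (y : n → R) (i : m) (j : n) (c : R) :
    x ᵥ* single i j c ⬝ᵥ y = c * (x i * y j) := by
  rw [← dotProduct_mulVec, single_mulVec, ← Pi.single, dotProduct_single]
  ring

section

variable {ι : Type*} (S : Finset ι)

def weightedCov (w f g : ι → ℝ) : ℝ :=
  ∑ t ∈ S, w t * (f t * g t) - (∑ t ∈ S, w t * f t) * (∑ t ∈ S, w t * g t)

theorem weightedCov_comm (w f g : ι → ℝ) : weightedCov S w f g = weightedCov S w g f := by
  simp only [weightedCov, mul_comm (f _), mul_comm (∑ t ∈ S, w t * f t)]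

theorem weightedCov_const_mul_left (w f g : ι → ℝ) (c : ℝ) :
    weightedCov S w (fun t => c * f t) g = c * weightedCov S w f g := by
  simp only [weightedCov, mul_assoc c, mul_left_comm (w _) c, ← Finset.mul_sum]
  ring

theorem weightedCov_sum_left {κ : Type*} (s : Finset κ) (w g : ι → ℝ) (f : κ → ι → ℝ) :
    weightedCov S w (fun t => ∑ b ∈ s, f b t) g = ∑ b ∈ s, weightedCov S w (f b) g := by
  simp only [weightedCov, Finset.sum_sub_distrib, ← Finset.sum_mul]
  congr 2 <;> simp only [Finset.sum_mul, Finset.mul_sum] <;> exact Finset.sum_comm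

theorem weightedCov_dotProduct_left {m : Type*} [Fintype m] (w g : ι → ℝ) (x : ι → m → ℝ)
    (u : m → ℝ) :
    weightedCov S w (fun t => x t ⬝ᵥ u) g = ∑ b, u b * weightedCov S w (fun t => x t b) g := by
  simp only [dotProduct, mul_comm (x _ _), weightedCov_sum_left, weightedCov_const_mul_left]

theorem weightedCov_dotProduct {m : Type*} [Fintype m] (w : ι → ℝ) (x : ι → m → ℝ)
    (u v : m → ℝ) :
    weightedCov S w (fun t => x t ⬝ᵥ u) (fun t => x t ⬝ᵥ v)
      = u ᵥ* Matrix.of (fun b e => weightedCov S w (fun t => x t b) (fun t => x t e)) ⬝ᵥ v := by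
  rw [← dotProduct_mulVec, weightedCov_dotProduct_left]
  refine sum_congr rfl fun b _ => ?_
  rw [weightedCov_comm, weightedCov_dotProduct_left]
  simp only [mulVec, dotProduct, of_apply]
  exact congrArg _ (sum_congr rfl fun e _ => by rw [weightedCov_comm, mul_comm])

noncomputable def softmax (s : ι → ℝ) (t : ι) : ℝ := exp (s t) / ∑ t' ∈ S, exp (s t')

theorem sum_softmax_mul (s v : ι → ℝ) :
    ∑ t ∈ S, softmax S s t * v t = (∑ t ∈ S, exp (s t) * v t) / ∑ t ∈ S, exp (s t) := by
  simp only [softmax, Finset.sum_div, div_mul_eq_mul_div]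

theorem hasDerivAt_sum_softmax_mul (hS : S.Nonempty) (s c v : ι → ℝ) :
    HasDerivAt (fun ε : ℝ => ∑ t ∈ S, softmax S (s + ε • c) t * v t)
      (weightedCov S (softmax S s) c v) 0 := by
  have hexp : ∀ t, HasDerivAt (fun ε : ℝ => exp ((s + ε • c) t)) (exp (s t) * c t) 0 := by
    intro t
    simpa using ((hasDerivAt_mul_const (x := (0 : ℝ)) (c t)).const_add (s t)).exp
  have hnum : HasDerivAt (fun ε : ℝ => ∑ t ∈ S, exp ((s + ε • c) t) * v t)
      (∑ t ∈ S, exp (s t) * (c t * v t)) 0 := by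
    simpa only [mul_assoc] using HasDerivAt.fun_sum fun t _ => (hexp t).mul_const (v t)
  have hden : HasDerivAt (fun ε : ℝ => ∑ t ∈ S, exp ((s + ε • c) t))
      (∑ t ∈ S, exp (s t) * c t) 0 :=
    HasDerivAt.fun_sum fun t _ => hexp t
  have hpos : 0 < ∑ t ∈ S, exp (s t) := sum_pos (fun t _ => exp_pos _) hS
  have hquot := hnum.div hden (by simpa using hpos.ne')
  simp only [sum_softmax_mul]
  refine hquot.congr_deriv ?_
  simp only [zero_smul, add_zero, weightedCov, sum_softmax_mul]
  field_simp

end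

theorem knn_attention_deriv_WQ_general
    (n dm d : ℕ)
    (X : Matrix (Fin n) (Fin dm) ℝ)
    (WQ WK WV : Matrix (Fin dm) (Fin d) ℝ)
    (l : Fin n) (S : Finset (Fin n)) (hS : S.Nonempty)
    -- attention weights for a given query weight matrix `W`
    (a : Matrix (Fin dm) (Fin d) ℝ → Fin n → ℝ)
    (ha : ∀ W t, a W t =
      Real.exp ((Matrix.vecMul (X l) W ⬝ᵥ Matrix.vecMul (X t) WK) / Real.sqrt d) /
        ∑ t' ∈ S, Real.exp ((Matrix.vecMul (X l) W ⬝ᵥ Matrix.vecMul (X t') WK) / Real.sqrt d))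
    -- attention output `V̂_l(W)` as a row vector in `ℝ^d`
    (Vhat : Matrix (Fin dm) (Fin d) ℝ → Fin d → ℝ)
    (hVhat : ∀ W c, Vhat W c = ∑ t ∈ S, a W t * Matrix.vecMul (X t) WV c)
    -- the weighted covariance matrix of the tokens under the weights `a WQ`
    (Var : Matrix (Fin dm) (Fin dm) ℝ)
    (hVar : ∀ b c, Var b c =
      (∑ t ∈ S, a WQ t * (X t b * X t c)) -
        (∑ t ∈ S, a WQ t * X t b) * (∑ t ∈ S, a WQ t * X t c)) :
    ∀ (i : Fin dm) (j : Fin d),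
      HasDerivAt (fun ε : ℝ => Vhat (WQ + ε • Matrix.single i j 1))
        ((1 / Real.sqrt d * X l i) •
          Matrix.vecMul (fun b => WK b j) (Var * WV)) 0 := by
  intro i j
  set score : Matrix (Fin dm) (Fin d) ℝ → Fin n → ℝ :=
    fun W t => (X l ᵥ* W ⬝ᵥ X t ᵥ* WK) / √d
  have ha_softmax : ∀ W, a W = softmax S (score W) := fun W => funext (ha W)
  have hVar_cov : Var = Matrix.of fun b e => weightedCov S (a WQ) (X · b) (X · e) :=
    Matrix.ext hVar
  set u : Fin n → ℝ := fun t => 1 / √d * X l i * (X t ⬝ᵥ fun b => WK b j)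
  have hscore : ∀ ε : ℝ, score (WQ + ε • single i j 1) = score WQ + ε • u := by
    intro ε
    funext t
    show _ = score WQ t + ε * (1 / √d * X l i * (X t ᵥ* WK) j)
    simp only [score, vecMul_add, add_dotProduct, vecMul_smul, smul_dotProduct,
      vecMul_single_dotProduct, smul_eq_mul]
    ring
  refine hasDerivAt_pi.mpr fun c => ?_
  have hVhat_softmax : ∀ ε : ℝ, Vhat (WQ + ε • single i j 1) c
      = ∑ t ∈ S, softmax S (score WQ + ε • u) t * (X t ⬝ᵥ fun e => WV e c) := by
    intro ε
    rw [hVhat, ha_softmax, hscore]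
    rfl
  simp only [hVhat_softmax]
  refine (hasDerivAt_sum_softmax_mul S hS (score WQ) u _).congr_deriv ?_
  rw [← ha_softmax, weightedCov_const_mul_left, weightedCov_dotProduct S _ X, ← hVar_cov,
    ← vecMul_vecMul]
  rfl

/-- Derivative of the (softmax-over-`S`) attention output for query `l`
with respect to the `(i,j)` entry of the query weight matrix `W_Q`. -/
theorem knn_attention_deriv_WQ
    (n dm d : ℕ) (hn : 0 < n) (hdm : 0 < dm) (hd : 0 < d)
    (X : Matrix (Fin n) (Fin dm) ℝ)
    (WQ WK WV : Matrix (Fin dm) (Fin d) ℝ)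
    (l : Fin n) (S : Finset (Fin n)) (hS : S.Nonempty)
    -- attention weights for a given query weight matrix `W`
    (a : Matrix (Fin dm) (Fin d) ℝ → Fin n → ℝ)
    (ha : ∀ W t, a W t =
      Real.exp ((Matrix.vecMul (X l) W ⬝ᵥ Matrix.vecMul (X t) WK) / Real.sqrt d) /
        ∑ t' ∈ S, Real.exp ((Matrix.vecMul (X l) W ⬝ᵥ Matrix.vecMul (X t') WK) / Real.sqrt d))
    -- attention output `V̂_l(W)` as a row vector in `ℝ^d`
    (Vhat : Matrix (Fin dm) (Fin d) ℝ → Fin d → ℝ)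
    (hVhat : ∀ W c, Vhat W c = ∑ t ∈ S, a W t * Matrix.vecMul (X t) WV c)
    -- the weighted covariance matrix of the tokens under the weights `a WQ`
    (Var : Matrix (Fin dm) (Fin dm) ℝ)
    (hVar : ∀ b c, Var b c =
      (∑ t ∈ S, a WQ t * (X t b * X t c)) -
        (∑ t ∈ S, a WQ t * X t b) * (∑ t ∈ S, a WQ t * X t c)) :
    ∀ (i : Fin dm) (j : Fin d),
      HasDerivAt (fun ε : ℝ => Vhat (WQ + ε • Matrix.single i j 1))
        ((1 / Real.sqrt d * X l i) •
          Matrix.vecMul (fun b => WK b j) (Var * WV)) 0 :=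
  knn_attention_deriv_WQ_general n dm d X WQ WK WV l S hS a ha Vhat hVhat Var hVar
end

section
/- Let K ∈ ℝ^{n×d} have rows k₁,…,k_n ∈ ℝ^d (row vectors) that sum to the zero vector, and let q ∈ ℝ^d be a row vector. Consider f(β) = ‖β K − q‖₂² for β ∈ ℝ^{1×n}, whose gradient is ∇f(β) = 2(βK − q)K^T. Starting from the uniform point β₀ = (1/n,…,1/n) in the probability simplex, one step of the exponentiated-gradient update with step size η = 1/(2√d), namely β₁_i = β₀_i exp(−η (∇f(β₀))_i) / Σ_{j=1}^n β₀_j exp(−η (∇f(β₀))_j), yields exactly the softmax attention weights: β₁_i = exp(k_i q^T/√d) / Σ_{j=1}^n exp(k_j q^T/√d) for every i = 1,…,n. -/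
open Matrix Finset Real

/-!
At the uniform point `β₀ = (1/n, …, 1/n)` the row `β₀ K` is the mean of the keys, which vanishes,
so the gradient there is `-2 K qᵀ` and `-η ∇f(β₀) = K qᵀ / √d`. The exponentiated-gradient step
from a uniform point is the softmax of `-η ∇f(β₀)`, because the common factor `1/n` cancels
from the normalisation.
-/

theorem Matrix.vecMul_const_eq_zero_of_sum_eq_zero {R m n : Type*} [NonUnitalNonAssocSemiring R] [Fintype m]
    {K : Matrix m n R} (hK : ∀ j, ∑ i, K i j = 0) (c : R) :
    vecMul (fun _ => c) K = 0 := by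
  funext j
  simp only [vecMul, dotProduct, ← Finset.mul_sum, hK j, mul_zero, Pi.zero_apply]

theorem mul_div_sum_mul_left {ι 𝕜 : Type*} [Fintype ι] [Semifield 𝕜] {c : 𝕜} (hc : c ≠ 0)
    (w : ι → 𝕜) (i : ι) :
    c * w i / ∑ j, c * w j = w i / ∑ j, w j := by
  rw [← Finset.mul_sum, mul_div_mul_left _ _ hc]

theorem eg_step_is_softmax_general
    (n d : ℕ)
    (K : Matrix (Fin n) (Fin d) ℝ)
    (hzero : ∀ j, ∑ i, K i j = 0)
    (q : Fin d → ℝ)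
    (β₀ : Fin n → ℝ) (hβ₀ : ∀ i, β₀ i = 1 / n)
    (η : ℝ) (hη : η = 1 / (2 * Real.sqrt d))
    -- the gradient of `f` at `β₀`: `∇f(β₀) = 2(β₀ K − q) Kᵀ`
    (g : Fin n → ℝ)
    (hg : ∀ i, g i = 2 * ((Matrix.vecMul β₀ K - q) ⬝ᵥ K i)) :
    ∀ i, β₀ i * Real.exp (-η * g i) / (∑ j, β₀ j * Real.exp (-η * g j)) =
      Real.exp (K i ⬝ᵥ q / Real.sqrt d) / ∑ j, Real.exp (K j ⬝ᵥ q / Real.sqrt d) := by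
  intro i
  have hβ₀K : vecMul β₀ K = 0 := by
    rw [funext hβ₀]
    exact vecMul_const_eq_zero_of_sum_eq_zero hzero _
  have hstep : ∀ j, -η * g j = K j ⬝ᵥ q / Real.sqrt d := fun j => by
    rw [hg, hβ₀K, hη, zero_sub, neg_dotProduct, dotProduct_comm]
    ring
  have hn : (1 / n : ℝ) ≠ 0 := by
    have := i.pos
    positivity
  simp only [hstep, hβ₀]
  exact mul_div_sum_mul_left hn (fun j => Real.exp (K j ⬝ᵥ q / Real.sqrt d)) i

/-- One exponentiated-gradient step on `f(β) = ‖βK − q‖₂²`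
(whose gradient is `2(βK − q)Kᵀ`), starting from the uniform point of the simplex with
step size `η = 1/(2√d)`, yields exactly the softmax attention weights
`exp (kᵢ qᵀ/√d) / Σⱼ exp (kⱼ qᵀ/√d)`, provided the rows of `K` sum to zero. -/
theorem eg_step_is_softmax
    (n d : ℕ) (hn : 0 < n) (hd : 0 < d)
    (K : Matrix (Fin n) (Fin d) ℝ)
    (hzero : ∀ j, ∑ i, K i j = 0)
    (q : Fin d → ℝ)
    (β₀ : Fin n → ℝ) (hβ₀ : ∀ i, β₀ i = 1 / n)
    (η : ℝ) (hη : η = 1 / (2 * Real.sqrt d))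
    -- the gradient of `f` at `β₀`: `∇f(β₀) = 2(β₀ K − q) Kᵀ`
    (g : Fin n → ℝ)
    (hg : ∀ i, g i = 2 * ((Matrix.vecMul β₀ K - q) ⬝ᵥ K i)) :
    ∀ i, β₀ i * Real.exp (-η * g i) / (∑ j, β₀ j * Real.exp (-η * g j)) =
      Real.exp (K i ⬝ᵥ q / Real.sqrt d) / ∑ j, Real.exp (K j ⬝ᵥ q / Real.sqrt d) :=
  eg_step_is_softmax_general n d K hzero q β₀ hβ₀ η hη g hg
end
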